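/- arXiv:1309.0254 — 3 statements merged into one kernel-verified Lean document; each statement's English description precedes it below -/
import Mathlib

section
/- Let (W, S) be a Coxeter system, and let v, w ∈ W. If some reduced word for w contains a subword (i.e., a not-necessarily-contiguous subsequence) that is a reduced word for v, then every reduced word for w contains a subword that is a reduced word for v. -/
/-!
Both conditions are equivalent to `v ≤ w` in the Bruhat order, generated by `u < t u` for
reflections `t` with `ℓ u < ℓ (t u)`.

If `u ≤ w`, then every word for `w` has a subword for `u`: this is the strong exchange property,
which comes from the action of `W` on `W × ZMod 2` of Björner–Brenti (Thm. 1.4.3), under which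
the parity of the number of occurrences of a reflection in the right inversion sequence of a word
depends only on the product of the word.

Conversely, subwords of a reduced word for `w` have products `≤ w`, by induction on the word,
since `u ≤ w` implies `s u ≤ w` or `s u ≤ s w` for every simple reflection `s`.
-/

theorem mul_mul_inv_eq_iff_eq_inv_mul_mul {G : Type*} [Group G] (c x y : G) :
    c * x * c⁻¹ = y ↔ x = c⁻¹ * y * c := by
  constructor <;> rintro rfl <;> group

namespace CoxeterSystem

open List

variable {B W : Type*} [Group W] {M : CoxeterMatrix B} (cs : CoxeterSystem M W)

local prefix:100 "s " => cs.simple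
local prefix:100 "π " => cs.wordProd
local prefix:100 "ℓ " => cs.length
local prefix:100 "ris " => cs.rightInvSeq
local prefix:100 "lis " => cs.leftInvSeq

open Classical in
noncomputable def invParity (ω : List B) (t : W) : ZMod 2 :=
  ((ris ω).count t : ZMod 2)

open Classical in
theorem invParity_cons (i : B) (ω : List B) (t : W) :
    cs.invParity (i :: ω) t =
      cs.invParity ω t + if (π ω)⁻¹ * s i * π ω = t then 1 else 0 := by
  simp only [invParity, rightInvSeq, count_cons, beq_iff_eq]
  split_ifs <;> simp

open Classical in
theorem invParity_of_not_mem {ω : List B} {t : W} (h : t ∉ ris ω) : cs.invParity ω t = 0 := by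
  simp [invParity, count_eq_zero.mpr h]

theorem simple_mul_mul_simple_eq_iff (i : B) (t u : W) :
    s i * t * s i = u ↔ t = s i * u * s i := by
  simpa [cs.inv_simple] using mul_mul_inv_eq_iff_eq_inv_mul_mul (s i) t u

theorem simple_mul_mul_simple_eq_simple_iff (i : B) (t : W) :
    s i * t * s i = s i ↔ t = s i := by
  rw [simple_mul_mul_simple_eq_iff, mul_assoc, simple_mul_simple_cancel_left]

open Classical in
noncomputable def reflPerm (i : B) : Equiv.Perm (W × ZMod 2) :=
  Function.Involutive.toPerm (fun p => (s i * p.1 * s i, p.2 + if p.1 = s i then 1 else 0))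
    (by
      rintro ⟨t, ε⟩
      simp only [cs.simple_mul_mul_simple_eq_simple_iff, add_assoc, CharTwo.add_self_eq_zero,
        add_zero, Prod.mk.injEq, and_true]
      simp [cs.simple_mul_simple_cancel_left, ← mul_assoc, cs.simple_mul_simple_cancel_right])

open Classical in
theorem reflPerm_apply (i : B) (t : W) (ε : ZMod 2) :
    cs.reflPerm i (t, ε) = (s i * t * s i, ε + if t = s i then 1 else 0) := rfl

theorem prod_map_reflPerm_apply (ω : List B) (t : W) (ε : ZMod 2) :
    (ω.map cs.reflPerm).prod (t, ε) = (π ω * t * (π ω)⁻¹, ε + cs.invParity ω t) := by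
  classical
  induction ω generalizing ε with
  | nil => simp [invParity]
  | cons i ω ih =>
    rw [map_cons, prod_cons, Equiv.Perm.mul_apply, ih, reflPerm_apply, invParity_cons,
      wordProd_cons, mul_inv_rev, inv_simple]
    have hcond : π ω * t * (π ω)⁻¹ = s i ↔ (π ω)⁻¹ * s i * π ω = t := by
      constructor <;> intro h <;> rw [← h] <;> group
    rw [if_congr hcond rfl rfl]
    simp only [mul_assoc, add_assoc]

theorem invParity_append (α β : List B) (t : W) :
    cs.invParity (α ++ β) t = cs.invParity α (π β * t * (π β)⁻¹) + cs.invParity β t := by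
  have h := congrArg Prod.snd (cs.prod_map_reflPerm_apply (α ++ β) t 0)
  rw [map_append, prod_append, Equiv.Perm.mul_apply, cs.prod_map_reflPerm_apply,
    cs.prod_map_reflPerm_apply] at h
  simp only [zero_add] at h
  rw [← h, add_comm]

open Classical in
theorem reflPerm_mul_reflPerm_pow_apply (i i' : B) (k : ℕ) (t : W) (ε : ZMod 2) :
    ((cs.reflPerm i * cs.reflPerm i') ^ k) (t, ε) =
      ((s i * s i') ^ k * t * ((s i * s i') ^ k)⁻¹,
        ε + ∑ j ∈ Finset.range (2 * k),
          if ((s i * s i') ^ j)⁻¹ * s i' = t then 1 else 0) := by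
  set r := s i * s i'
  have hsr : ∀ n : ℕ, s i' * r ^ n = (r ^ n)⁻¹ * s i' := by
    intro n
    rw [← inv_pow, mul_inv_rev, inv_simple, inv_simple]
    exact SemiconjBy.pow_right (by simp [SemiconjBy, r, mul_assoc]) n
  induction k with
  | zero => simp
  | succ k ih =>
    rw [pow_succ', Equiv.Perm.mul_apply, ih, Equiv.Perm.mul_apply, reflPerm_apply, reflPerm_apply,
      show 2 * (k + 1) = 2 * k + 1 + 1 by ring, Finset.sum_range_succ, Finset.sum_range_succ]
    have e1 : (r ^ (2 * k))⁻¹ * s i' = (r ^ k)⁻¹ * s i' * r ^ k := by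
      rw [mul_assoc, hsr, two_mul, pow_add, mul_inv_rev, mul_assoc]
    have e2 : (r ^ (2 * k + 1))⁻¹ * s i' = (r ^ k)⁻¹ * (s i' * s i * s i') * r ^ k := by
      rw [mul_assoc _ _ (r ^ k), mul_assoc (s i' * s i), hsr,
        show 2 * k + 1 = k + 1 + k by ring, pow_add, pow_succ]
      simp only [r, mul_inv_rev, inv_simple, mul_assoc]
    have h1 : r ^ k * t * (r ^ k)⁻¹ = s i' ↔ (r ^ (2 * k))⁻¹ * s i' = t := by
      rw [e1, mul_mul_inv_eq_iff_eq_inv_mul_mul, eq_comm]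
    have h2 : s i' * (r ^ k * t * (r ^ k)⁻¹) * s i' = s i ↔
        (r ^ (2 * k + 1))⁻¹ * s i' = t := by
      rw [e2, cs.simple_mul_mul_simple_eq_iff, mul_mul_inv_eq_iff_eq_inv_mul_mul, eq_comm]
    rw [if_congr h1 rfl rfl, if_congr h2 rfl rfl]
    simp only [r, pow_succ', mul_inv_rev, inv_simple, mul_assoc, add_assoc]

-- With `r = s i * s i'` of order dividing `m = M i i'`, the reflections `(r ^ j)⁻¹ * s i'`,
-- `j < 2 * m`, repeat with period `m`, so each occurs an even number of times.
theorem isLiftable_reflPerm : M.IsLiftable cs.reflPerm := by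
  classical
  intro i i'
  ext ⟨t, ε⟩ : 1
  set m := M i i'
  have hr : (s i * s i') ^ m = 1 := cs.simple_mul_simple_pow i i'
  rw [reflPerm_mul_reflPerm_pow_apply, two_mul, Finset.sum_range_add]
  simp only [pow_add, hr, one_mul, inv_one, mul_one, CharTwo.add_self_eq_zero, add_zero,
    Equiv.Perm.one_apply]

noncomputable def reflRep : W →* Equiv.Perm (W × ZMod 2) :=
  cs.lift ⟨cs.reflPerm, cs.isLiftable_reflPerm⟩

theorem reflRep_wordProd (ω : List B) : cs.reflRep (π ω) = (ω.map cs.reflPerm).prod := by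
  rw [wordProd, map_list_prod, map_map]
  congr 1
  exact map_congr_left fun i _ => cs.lift_apply_simple cs.isLiftable_reflPerm i

theorem invParity_eq_of_wordProd_eq {ω ω' : List B} (h : π ω = π ω') (t : W) :
    cs.invParity ω t = cs.invParity ω' t := by
  have key : ∀ χ : List B, cs.invParity χ t = (cs.reflRep (π χ) (t, 0)).2 := fun χ => by
    rw [reflRep_wordProd, prod_map_reflPerm_apply, zero_add]
  rw [key, key, h]

theorem invParity_palindrome (γ : List B) (i : B) :
    cs.invParity (γ ++ i :: γ.reverse) (π γ * s i * (π γ)⁻¹) = 1 := by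
  classical
  set t := π γ * s i * (π γ)⁻¹
  have hγ : cs.invParity γ (s i) + cs.invParity γ.reverse t = 0 := by
    have h := cs.invParity_append γ γ.reverse t
    rw [cs.invParity_eq_of_wordProd_eq (ω' := []) (by simp [wordProd_append]) t] at h
    simpa [t, mul_assoc, invParity] using h.symm
  rw [invParity_append, invParity_cons]
  have hconj : π (i :: γ.reverse) * t * (π (i :: γ.reverse))⁻¹ = s i := by
    simp [t, wordProd_cons, mul_assoc, inv_simple]
  rw [hconj, if_pos (by simp [t])]
  linear_combination hγ

theorem mem_rightInvSeq_of_isRightInversion {ω : List B} {t : W}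
    (h : cs.IsRightInversion (π ω) t) : t ∈ ris ω := by
  -- `ω` has the same product as `α ++ τ`, with `α` reduced for `π ω * t` (so `t ∉ ris α`)
  -- and `τ` a palindrome for `t`; hence `t` occurs an odd number of times in `ris ω`.
  obtain ⟨ht, hlt⟩ := h
  obtain ⟨u, i, rfl⟩ := id ht
  obtain ⟨γ, rfl⟩ := cs.wordProd_surjective u
  set t := π γ * s i * (π γ)⁻¹
  set τ := γ ++ i :: γ.reverse
  have hτ : π τ = t := by simp [τ, t, wordProd_append, wordProd_cons, mul_assoc]
  obtain ⟨α, hα, hπα⟩ := cs.exists_isReduced (π ω * t)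
  have hαt : cs.invParity α t = 0 := by
    refine cs.invParity_of_not_mem fun hmem => ?_
    have := (cs.isRightInversion_of_mem_rightInvSeq hα hmem).2
    rw [← hπα, mul_assoc, ht.mul_self, mul_one] at this
    exact lt_asymm hlt this
  have hω : cs.invParity ω t = 1 := by
    rw [cs.invParity_eq_of_wordProd_eq (ω' := α ++ τ)
      (by rw [wordProd_append, hτ, ← hπα, mul_assoc, ht.mul_self, mul_one]),
      invParity_append, hτ, mul_inv_cancel_right, hαt, invParity_palindrome, zero_add]
  by_contra hmem
  rw [cs.invParity_of_not_mem hmem] at hω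
  exact zero_ne_one hω

theorem mem_leftInvSeq_of_isLeftInversion {ω : List B} {t : W}
    (h : cs.IsLeftInversion (π ω) t) : t ∈ lis ω := by
  rw [← isRightInversion_inv_iff, ← wordProd_reverse] at h
  simpa [rightInvSeq_reverse] using cs.mem_rightInvSeq_of_isRightInversion h

theorem strong_exchange_left {ω : List B} {t : W} (h : cs.IsLeftInversion (π ω) t) :
    ∃ j < ω.length, π (ω.eraseIdx j) = t * π ω := by
  obtain ⟨j, hj, rfl⟩ := mem_iff_getElem.mp (cs.mem_leftInvSeq_of_isLeftInversion h)
  rw [length_leftInvSeq] at hj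
  exact ⟨j, hj, by rw [← getD_leftInvSeq_mul_wordProd, getD_eq_getElem]⟩

def BruhatLE (u w : W) : Prop :=
  Relation.ReflTransGen
    (fun x y => ∃ t, cs.IsReflection t ∧ ℓ x < ℓ (t * x) ∧ t * x = y) u w

variable {cs}

theorem bruhatLE_mul_left {t u : W} (ht : cs.IsReflection t) (h : ℓ u < ℓ (t * u)) :
    cs.BruhatLE u (t * u) :=
  .single ⟨t, ht, h, rfl⟩

theorem bruhatLE_simple_mul_or {t u : W} (i : B) (ht : cs.IsReflection t)
    (hlt : ℓ u < ℓ (t * u)) :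
    cs.BruhatLE (s i * u) (t * u) ∨ cs.BruhatLE (s i * u) (s i * (t * u)) := by
  have hconj : s i * t * s i * (s i * u) = s i * (t * u) := by
    simp [mul_assoc, simple_mul_simple_cancel_left]
  have ht' : cs.IsReflection (s i * t * s i) := by simpa [inv_simple] using ht.conj (s i)
  rcases cs.length_simple_mul (t * u) i with hup | hdown
  · right
    rw [← hconj]
    refine bruhatLE_mul_left ht' ?_
    have := cs.length_simple_mul u i
    rw [hconj]
    omega
  · obtain ⟨α, hα, hπα⟩ := cs.exists_isReduced (s i * (t * u))
    have hπ : π (i :: α) = t * u := by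
      rw [wordProd_cons, ← hπα, simple_mul_simple_cancel_left]
    obtain ⟨j, hjlt, hj⟩ := cs.strong_exchange_left (ω := i :: α) (t := t)
      ⟨ht, by rw [hπ, ← mul_assoc, ht.mul_self, one_mul]; exact hlt⟩
    rw [hπ, ← mul_assoc, ht.mul_self, one_mul] at hj
    cases j with
    | zero =>
      left
      have hsu : s i * u = t * u := calc
        s i * u = s i * π α := by rw [← hj, eraseIdx_cons_zero]
        _ = t * u := by rw [← hπα, simple_mul_simple_cancel_left]
      rw [hsu]
      exact .refl
    | succ j =>
      right
      rw [← hconj]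
      refine bruhatLE_mul_left ht' ?_
      have hsu : s i * u = π (α.eraseIdx j) := by
        rw [← hj, eraseIdx_cons_succ, wordProd_cons, simple_mul_simple_cancel_left]
      rw [hconj, hπα, hα.eq, hsu]
      calc ℓ (π (α.eraseIdx j)) ≤ (α.eraseIdx j).length := cs.length_wordProd_le _
        _ < α.length := by
          rw [length_cons] at hjlt
          rw [length_eraseIdx_of_lt (by omega)]
          omega

theorem BruhatLE.simple_mul_or {u w : W} (h : cs.BruhatLE u w) (i : B) :
    cs.BruhatLE (s i * u) w ∨ cs.BruhatLE (s i * u) (s i * w) := by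
  induction h with
  | refl => exact .inr .refl
  | tail _ hstep ih =>
    obtain ⟨t, ht, hlt, rfl⟩ := hstep
    rcases ih with h | h
    · exact .inl (h.tail ⟨t, ht, hlt, rfl⟩)
    · exact (bruhatLE_simple_mul_or i ht hlt).imp h.trans h.trans

theorem bruhatLE_wordProd_of_sublist {ω σ : List B} (hω : cs.IsReduced ω) (hσ : σ <+ ω) :
    cs.BruhatLE (π σ) (π ω) := by
  induction ω generalizing σ with
  | nil => rw [sublist_nil.mp hσ]; exact .refl
  | cons i α ih =>
    have hα : cs.IsReduced α := by simpa using hω.drop 1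
    have hlt : ℓ (π α) < ℓ (s i * π α) := by
      rw [← wordProd_cons, hω.eq, hα.eq, length_cons]
      exact lt_add_one _
    rw [wordProd_cons]
    rcases sublist_cons_iff.mp hσ with hσα | ⟨σ', rfl, hσ'⟩
    · exact (ih hα hσα).trans (bruhatLE_mul_left (cs.isReflection_simple i) hlt)
    · rw [wordProd_cons]
      exact ((ih hα hσ').simple_mul_or i).elim
        (·.trans (bruhatLE_mul_left (cs.isReflection_simple i) hlt)) id

theorem BruhatLE.exists_sublist {u w : W} (h : cs.BruhatLE u w) {ω : List B} (hω : π ω = w) :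
    ∃ σ, σ <+ ω ∧ π σ = u := by
  induction h generalizing ω with
  | refl => exact ⟨ω, .refl ω, hω⟩
  | tail _ hstep ih =>
    obtain ⟨t, ht, hlt, rfl⟩ := hstep
    obtain ⟨j, -, hj⟩ := cs.strong_exchange_left (ω := ω) (t := t)
      ⟨ht, by rw [hω, ← mul_assoc, ht.mul_self, one_mul]; exact hlt⟩
    rw [hω, ← mul_assoc, ht.mul_self, one_mul] at hj
    obtain ⟨σ, hσ, hπσ⟩ := ih hj
    exact ⟨σ, hσ.trans (eraseIdx_sublist ω j), hπσ⟩

variable (cs) in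
theorem exists_isReduced_sublist (ω : List B) :
    ∃ σ, σ <+ ω ∧ cs.IsReduced σ ∧ π σ = π ω := by
  induction ω with
  | nil => exact ⟨[], .slnil, by simp [IsReduced], rfl⟩
  | cons i α ih =>
    obtain ⟨σ, hσ, hred, hπ⟩ := ih
    rw [wordProd_cons, ← hπ]
    rcases cs.length_simple_mul (π σ) i with hup | hdown
    · refine ⟨i :: σ, hσ.cons_cons i, ?_, wordProd_cons ..⟩
      rw [IsReduced, wordProd_cons, hup, hred.eq, length_cons]
    · obtain ⟨j, hj, hπj⟩ := cs.strong_exchange_left (ω := σ) (t := s i)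
        ⟨cs.isReflection_simple i, by omega⟩
      refine ⟨σ.eraseIdx j, (eraseIdx_sublist σ j).trans (hσ.trans (sublist_cons_self i α)),
        ?_, hπj⟩
      rw [IsReduced, hπj, length_eraseIdx_of_lt hj, ← hred.eq]
      omega

end CoxeterSystem

/-- In a Coxeter system `(W, S)`, if some reduced word for `w` contains a
(not-necessarily-contiguous) subword that is a reduced word for `v`, then every reduced word
for `w` contains a subword that is a reduced word for `v`. -/
theorem billey_stmt_0 {B W : Type*} [Group W] {M : CoxeterMatrix B}
    (cs : CoxeterSystem M W) (v w : W)
    (h : ∃ ω : List B, cs.IsReduced ω ∧ cs.wordProd ω = w ∧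
      ∃ ω' : List B, ω'.Sublist ω ∧ cs.IsReduced ω' ∧ cs.wordProd ω' = v) :
    ∀ ω : List B, cs.IsReduced ω → cs.wordProd ω = w →
      ∃ ω' : List B, ω'.Sublist ω ∧ cs.IsReduced ω' ∧ cs.wordProd ω' = v := by
  obtain ⟨ω₀, hω₀, rfl, σ, hσ, -, rfl⟩ := h
  intro ω _ hω
  obtain ⟨τ, hτ, hπτ⟩ := (cs.bruhatLE_wordProd_of_sublist hω₀ hσ).exists_sublist hω
  obtain ⟨ρ, hρ, hred, hπρ⟩ := cs.exists_isReduced_sublist τ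
  exact ⟨ρ, hρ.trans hτ, hred, hπρ.trans hπτ⟩
end

section
/- Fix n ≥ 1 and permutations v, w in S_n. For any two reduced words (b_1, ..., b_m) and (b'_1, ..., b'_m) for w, the polynomials σ_v(w) computed from these two reduced words via Billey's formula are equal. That is, Billey's formula is independent of the choice of reduced word for w. -/
/-!
Induction on the length `ℓ(w)`, which is the number of inversions of `w`. Splitting off the last
letter `b` of a reduced word for `w` gives
`σ_v(w) = σ_v(w s_b) + [ℓ(v s_b) < ℓ(v)] σ_{v s_b}(w s_b) · (w s_b)(α_b)`,
whose right side, by induction, depends only on the descent `b` of `w`. For two descents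
`b < c` of `w`, expand each side once more (twice more when `c = b + 1`) until both reach
`w s_b s_c` (resp. `w s_b s_{b+1} s_b = w s_{b+1} s_b s_{b+1}`): the two expansions agree by the
commutation (resp. braid) relation and an identity between the roots `w(α_b)`, `w(α_c)`.
-/

open Equiv MvPolynomial

/-- The adjacent transposition `s_i = (i, i+1)` in `S_n` (defined to be `1` if `i+1 ≥ n`). -/
def simpleRefl (n : ℕ) (i : ℕ) : Equiv.Perm (Fin n) :=
  if h : i + 1 < n then Equiv.swap ⟨i, Nat.lt_of_succ_lt h⟩ ⟨i + 1, h⟩ else 1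

/-- A word is a list of indices `i` with `i + 1 < n` (0-indexed version of `1 ≤ i ≤ n-1`). -/
def IsWord (n : ℕ) (l : List ℕ) : Prop := ∀ b ∈ l, b + 1 < n

/-- The product `s_{b_1} ⋯ s_{b_m}` of the simple reflections of a word. -/
def wordProd (n : ℕ) (l : List ℕ) : Equiv.Perm (Fin n) := (l.map (simpleRefl n)).prod

/-- `l` is a reduced word for `w`: its product is `w` and no shorter word has product `w`. -/
def IsReducedWord (n : ℕ) (w : Equiv.Perm (Fin n)) (l : List ℕ) : Prop :=
  IsWord n l ∧ wordProd n l = w ∧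
    ∀ l' : List ℕ, IsWord n l' → wordProd n l' = w → l.length ≤ l'.length

/-- The Coxeter length `ℓ(w)`: the length of any reduced word for `w`. -/
noncomputable def coxLen (n : ℕ) (w : Equiv.Perm (Fin n)) : ℕ :=
  sInf {m | ∃ l : List ℕ, IsWord n l ∧ wordProd n l = w ∧ l.length = m}

/-- Bruhat order: the partial order generated by `v < t * v` whenever `t` is a
transposition and `ℓ(v) < ℓ(t * v)`. -/
def BruhatLE (n : ℕ) : Equiv.Perm (Fin n) → Equiv.Perm (Fin n) → Prop :=
  Relation.ReflTransGen fun x y =>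
    (∃ t : Equiv.Perm (Fin n), t.IsSwap ∧ y = t * x) ∧ coxLen n x < coxLen n y

/-- The simple root `α_i = t_i - t_{i+1}` in `ℤ[t_1, …, t_n]` (defined as `0` if `i+1 ≥ n`). -/
noncomputable def simpleRoot (n : ℕ) (i : ℕ) : MvPolynomial (Fin n) ℤ :=
  if h : i + 1 < n then X ⟨i, Nat.lt_of_succ_lt h⟩ - X ⟨i + 1, h⟩ else 0

/-- The root `r_j = (s_{b_1} ⋯ s_{b_{j-1}}) · α_{b_j}` associated to position `j` of a word,
where `S_n` acts on polynomials by permuting variables. -/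
noncomputable def wordRoot (n : ℕ) (l : List ℕ) (j : Fin l.length) : MvPolynomial (Fin n) ℤ :=
  rename (⇑(wordProd n (l.take j))) (simpleRoot n (l.get j))

open scoped Classical in
/-- Billey's formula `σ_v(w)`, computed from the reduced word `l` of `w`: the sum over all
index sequences `j_1 < ⋯ < j_k` such that `(b_{j_1}, …, b_{j_k})` is a reduced word for `v`,
of the products `r_{j_1} ⋯ r_{j_k}`. -/
noncomputable def billey (n : ℕ) (v : Equiv.Perm (Fin n)) (l : List ℕ) :
    MvPolynomial (Fin n) ℤ :=
  ∑ J : Finset (Fin l.length),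
    if IsReducedWord n v ((J.sort (· ≤ ·)).map l.get) then ∏ j ∈ J, wordRoot n l j else 0

namespace Billey

open Finset

variable {n : ℕ}

section SimpleReflections

variable {b c : ℕ}

lemma simpleRefl_of_lt (hb : b + 1 < n) : simpleRefl n b = swap ⟨b, by omega⟩ ⟨b + 1, hb⟩ :=
  dif_pos hb

@[simp]
lemma simpleRefl_mul_self (b : ℕ) : simpleRefl n b * simpleRefl n b = 1 := by
  unfold simpleRefl
  split <;> simp

@[simp]
lemma mul_simpleRefl_mul_simpleRefl (u : Perm (Fin n)) (b : ℕ) :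
    u * simpleRefl n b * simpleRefl n b = u := by
  rw [mul_assoc, simpleRefl_mul_self, mul_one]

@[simp]
lemma simpleRefl_inv (b : ℕ) : (simpleRefl n b)⁻¹ = simpleRefl n b :=
  inv_eq_of_mul_eq_one_right (simpleRefl_mul_self b)

lemma simpleRefl_apply_self (hb : b + 1 < n) (h : b < n) :
    simpleRefl n b ⟨b, h⟩ = ⟨b + 1, hb⟩ := by
  rw [simpleRefl_of_lt hb, swap_apply_left]

lemma simpleRefl_apply_succ (hb : b + 1 < n) : simpleRefl n b ⟨b + 1, hb⟩ = ⟨b, by omega⟩ := by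
  rw [simpleRefl_of_lt hb, swap_apply_right]

lemma simpleRefl_apply_of_ne {i : ℕ} (hi : i < n) (h₁ : i ≠ b) (h₂ : i ≠ b + 1) :
    simpleRefl n b ⟨i, hi⟩ = ⟨i, hi⟩ := by
  unfold simpleRefl
  split
  · exact swap_apply_of_ne_of_ne (by simpa [Fin.ext_iff]) (by simpa [Fin.ext_iff])
  · rfl

lemma simpleRefl_apply_val (i : Fin n) :
    (simpleRefl n b i : ℕ) =
      if b + 1 < n ∧ (i : ℕ) = b then b + 1 else if b + 1 < n ∧ (i : ℕ) = b + 1 then b else i := by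
  unfold simpleRefl
  split <;> simp [swap_apply_def, Fin.ext_iff] <;> split_ifs <;> simp_all

lemma simpleRefl_mul_comm (h : b + 1 < c) :
    simpleRefl n b * simpleRefl n c = simpleRefl n c * simpleRefl n b := by
  ext i
  simp only [Perm.mul_apply, simpleRefl_apply_val]
  split_ifs <;> omega

lemma simpleRefl_braid (hb : b + 2 < n) :
    simpleRefl n b * simpleRefl n (b + 1) * simpleRefl n b =
      simpleRefl n (b + 1) * simpleRefl n b * simpleRefl n (b + 1) := by
  rw [simpleRefl_of_lt (by omega), simpleRefl_of_lt hb]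
  set x : Fin n := ⟨b, by omega⟩
  set y : Fin n := ⟨b + 1, by omega⟩
  set z : Fin n := ⟨b + 1 + 1, hb⟩
  have hxy : x ≠ y := by simp [x, y, Fin.ext_iff]
  have hxz : x ≠ z := by simp [x, z, Fin.ext_iff]; omega
  have hyz : y ≠ z := by simp [y, z, Fin.ext_iff]
  rw [swap_mul_swap_mul_swap hxy hxz, swap_comm x y, swap_comm y z,
    swap_mul_swap_mul_swap hyz.symm hxz.symm, swap_comm]

end SimpleReflections

section Words

variable {l : List ℕ} {b : ℕ}

lemma wordProd_append_singleton (l : List ℕ) (b : ℕ) :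
    wordProd n (l ++ [b]) = wordProd n l * simpleRefl n b := by
  simp [wordProd]

lemma isWord_append_singleton : IsWord n (l ++ [b]) ↔ IsWord n l ∧ b + 1 < n := by
  simp [IsWord, or_imp, forall_and]

end Words

def IsDescent (n : ℕ) (w : Perm (Fin n)) (b : ℕ) : Prop :=
  ∃ h : b + 1 < n, w ⟨b + 1, h⟩ < w ⟨b, by omega⟩

section Descents

variable {w : Perm (Fin n)} {b c : ℕ}

lemma isDescent_iff (hb : b + 1 < n) : IsDescent n w b ↔ w ⟨b + 1, hb⟩ < w ⟨b, by omega⟩ :=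
  ⟨fun ⟨_, h⟩ ↦ h, fun h ↦ ⟨hb, h⟩⟩

lemma not_isDescent_iff (hb : b + 1 < n) :
    ¬IsDescent n w b ↔ w ⟨b, by omega⟩ < w ⟨b + 1, hb⟩ := by
  rw [isDescent_iff hb, not_lt, le_iff_lt_or_eq, or_iff_left]
  simp [Fin.ext_iff]

lemma isDescent_mul_simpleRefl_self (hb : b + 1 < n) :
    IsDescent n (w * simpleRefl n b) b ↔ ¬IsDescent n w b := by
  rw [isDescent_iff hb, not_isDescent_iff hb, Perm.mul_apply, Perm.mul_apply,
    simpleRefl_apply_self hb, simpleRefl_apply_succ hb]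

lemma isDescent_mul_simpleRefl_of_far (h : c + 1 < b ∨ b + 1 < c) :
    IsDescent n (w * simpleRefl n c) b ↔ IsDescent n w b := by
  refine exists_congr fun hb ↦ ?_
  rw [Perm.mul_apply, Perm.mul_apply, simpleRefl_apply_of_ne _ (by omega) (by omega),
    simpleRefl_apply_of_ne _ (by omega) (by omega)]

lemma isDescent_mul_simpleRefl_succ_iff (hb : b + 2 < n) :
    IsDescent n (w * simpleRefl n (b + 1)) b ↔ IsDescent n (w * simpleRefl n b) (b + 1) := by
  simp (disch := omega) only [isDescent_iff, Perm.mul_apply, simpleRefl_apply_self,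
    simpleRefl_apply_succ, simpleRefl_apply_of_ne]

lemma isDescent_mul_simpleRefl_mul_simpleRefl_succ_iff (hb : b + 2 < n) :
    IsDescent n (w * simpleRefl n b * simpleRefl n (b + 1)) b ↔ IsDescent n w (b + 1) := by
  simp (disch := omega) only [isDescent_iff, Perm.mul_apply, simpleRefl_apply_self,
    simpleRefl_apply_of_ne]

lemma isDescent_mul_simpleRefl_succ_mul_simpleRefl_iff (hb : b + 2 < n) :
    IsDescent n (w * simpleRefl n (b + 1) * simpleRefl n b) (b + 1) ↔ IsDescent n w b := by
  simp (disch := omega) only [isDescent_iff, Perm.mul_apply, simpleRefl_apply_succ,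
    simpleRefl_apply_of_ne]

lemma IsDescent.mul_simpleRefl_succ (hb : IsDescent n w b) (hb' : IsDescent n w (b + 1)) :
    IsDescent n (w * simpleRefl n b) (b + 1) := by
  obtain ⟨hn, h'⟩ := hb'
  rw [isDescent_iff hn, Perm.mul_apply, Perm.mul_apply, simpleRefl_apply_succ,
    simpleRefl_apply_of_ne _ (by omega) (by omega)]
  exact h'.trans ((isDescent_iff _).mp hb)

lemma eq_one_of_forall_not_isDescent (h : ∀ b, ¬IsDescent n w b) : w = 1 := by
  cases n with
  | zero => exact Subsingleton.elim _ _
  | succ m =>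
    have hmono : StrictMono w := Fin.strictMono_iff_lt_succ.mpr fun i ↦
      (not_isDescent_iff (by omega)).mp (h i)
    exact Equiv.ext fun i ↦ hmono.apply_eq

end Descents


def invCount (w : Perm (Fin n)) : ℕ := #{p : Fin n × Fin n | p.1 < p.2 ∧ w p.2 < w p.1}

section Inversions

variable {w : Perm (Fin n)} {l : List ℕ} {b : ℕ}

lemma invCount_one : invCount (1 : Perm (Fin n)) = 0 := by
  rw [invCount, card_eq_zero, filter_eq_empty_iff]
  exact fun _ _ h ↦ h.1.asymm h.2

lemma invCount_mul_simpleRefl_of_not_isDescent (hb : b + 1 < n) (h : ¬IsDescent n w b) :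
    invCount (w * simpleRefl n b) = invCount w + 1 := by
  set s := simpleRefl n b
  set a : Fin n := ⟨b, by omega⟩
  set a' : Fin n := ⟨b + 1, hb⟩
  have hw : w a < w a' := (not_isDescent_iff hb).mp h
  have hsa : s a = a' := simpleRefl_apply_self hb _
  have hsa' : s a' = a := simpleRefl_apply_succ hb
  have hss : ∀ i, s (s i) = i := fun i ↦ by simp [s, ← Perm.mul_apply]
  have hsymm : s.symm = s := simpleRefl_inv b
  have hs_lt : ∀ {i j : Fin n}, i < j → (i, j) ≠ (a, a') → s i < s j := by
    intro i j hij hne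
    simp only [ne_eq, Prod.mk.injEq, a, a', Fin.ext_iff] at hne
    simp only [Fin.lt_def, s, simpleRefl_apply_val] at hij ⊢
    split_ifs <;> omega
  have hinversions : ({p | p.1 < p.2 ∧ (w * s) p.2 < (w * s) p.1} : Finset (Fin n × Fin n)) =
      insert (a, a') (({p | p.1 < p.2 ∧ w p.2 < w p.1} : Finset _).map
        (s.prodCongr s).toEmbedding) := by
    ext ⟨i, j⟩
    simp only [mem_insert, mem_map_equiv, mem_filter, mem_univ, true_and]
    simp only [Perm.mul_apply, prodCongr_symm, hsymm, prodCongr_apply, Prod.map_apply]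
    constructor
    · rintro ⟨hij, hwij⟩
      by_cases hp : (i, j) = (a, a')
      · exact .inl hp
      · exact .inr ⟨hs_lt hij hp, hwij⟩
    · rintro (hp | ⟨hij, hwij⟩)
      · obtain ⟨rfl, rfl⟩ := Prod.mk.inj hp
        exact ⟨by simp [a, a', Fin.lt_def], by rwa [hsa, hsa']⟩
      · have hne : (s i, s j) ≠ (a, a') := by
          intro hp
          rw [(Prod.mk.inj hp).1, (Prod.mk.inj hp).2] at hwij
          exact hwij.asymm hw
        exact ⟨by simpa only [hss] using hs_lt hij hne, hwij⟩
  rw [invCount, invCount, hinversions, card_insert_of_notMem, card_map]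
  simp only [mem_map_equiv, mem_filter, prodCongr_symm, hsymm, prodCongr_apply, Prod.map_apply,
    hsa, hsa', not_and]
  exact fun _ h ↦ absurd h (by simp [a, a', Fin.lt_def])

lemma invCount_mul_simpleRefl_of_isDescent (h : IsDescent n w b) :
    invCount (w * simpleRefl n b) + 1 = invCount w := by
  have := invCount_mul_simpleRefl_of_not_isDescent h.1
    ((isDescent_mul_simpleRefl_self (w := w) h.1).not.mpr (not_not.mpr h))
  rwa [mul_simpleRefl_mul_simpleRefl, eq_comm] at this

lemma invCount_mul_simpleRefl_lt (h : IsDescent n w b) :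
    invCount (w * simpleRefl n b) < invCount w :=
  Nat.lt_of_succ_le (invCount_mul_simpleRefl_of_isDescent h).le

lemma invCount_wordProd_le (hl : IsWord n l) : invCount (wordProd n l) ≤ l.length := by
  induction l using List.reverseRecOn with
  | nil => exact invCount_one.le
  | append_singleton l b ih =>
    obtain ⟨hl, hb⟩ := isWord_append_singleton.mp hl
    have := ih hl
    rw [wordProd_append_singleton, List.length_append, List.length_singleton]
    by_cases hd : IsDescent n (wordProd n l) b
    · have := invCount_mul_simpleRefl_of_isDescent hd
      omega
    · have := invCount_mul_simpleRefl_of_not_isDescent hb hd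
      omega

lemma exists_word_length_eq_invCount (w : Perm (Fin n)) :
    ∃ l, IsWord n l ∧ wordProd n l = w ∧ l.length = invCount w := by
  induction h : invCount w using Nat.strong_induction_on generalizing w with
  | _ m ih =>
  by_cases hw : ∀ b, ¬IsDescent n w b
  · obtain rfl := eq_one_of_forall_not_isDescent hw
    exact ⟨[], by simp [IsWord], rfl, by rw [← h, invCount_one]; rfl⟩
  push Not at hw
  obtain ⟨b, hb⟩ := hw
  have hlt := invCount_mul_simpleRefl_of_isDescent hb
  obtain ⟨l, hl, hlw, hlen⟩ := ih _ (by omega) (w * simpleRefl n b) rfl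
  refine ⟨l ++ [b], isWord_append_singleton.mpr ⟨hl, hb.1⟩, ?_, by simp; omega⟩
  rw [wordProd_append_singleton, hlw, mul_simpleRefl_mul_simpleRefl]

lemma isReducedWord_iff {w : Perm (Fin n)} {l : List ℕ} :
    IsReducedWord n w l ↔ IsWord n l ∧ wordProd n l = w ∧ l.length = invCount w := by
  obtain ⟨l₀, hl₀, hl₀w, hl₀len⟩ := exists_word_length_eq_invCount w
  refine ⟨fun ⟨hl, hlw, hmin⟩ ↦ ⟨hl, hlw, ?_⟩, fun ⟨hl, hlw, hlen⟩ ↦ ⟨hl, hlw, ?_⟩⟩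
  · exact le_antisymm (hl₀len ▸ hmin l₀ hl₀ hl₀w) (hlw ▸ invCount_wordProd_le hl)
  · exact fun l' hl' hl'w ↦ hlen ▸ hl'w ▸ invCount_wordProd_le hl'

lemma IsReducedWord.length_eq {w : Perm (Fin n)} {l l' : List ℕ} (hl : IsReducedWord n w l)
    (hl' : IsReducedWord n w l') : l.length = l'.length :=
  le_antisymm (hl.2.2 l' hl'.1 hl'.2.1) (hl'.2.2 l hl.1 hl.2.1)

lemma isReducedWord_append_singleton_iff :
    IsReducedWord n w (l ++ [b]) ↔
      IsReducedWord n (w * simpleRefl n b) l ∧ IsDescent n w b := by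
  have hprod : wordProd n l * simpleRefl n b = w ↔ wordProd n l = w * simpleRefl n b :=
    ⟨fun h ↦ by rw [← h, mul_simpleRefl_mul_simpleRefl],
      fun h ↦ by rw [h, mul_simpleRefl_mul_simpleRefl]⟩
  rw [isReducedWord_iff, isReducedWord_iff, isWord_append_singleton, wordProd_append_singleton,
    hprod, List.length_append, List.length_singleton]
  constructor
  · rintro ⟨⟨hl, hb⟩, hlw, hlen⟩
    have hle := hlw ▸ invCount_wordProd_le hl
    by_cases hd : IsDescent n w b
    · have := invCount_mul_simpleRefl_of_isDescent hd
      exact ⟨⟨hl, hlw, by omega⟩, hd⟩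
    · have := invCount_mul_simpleRefl_of_not_isDescent hb hd
      omega
  · rintro ⟨⟨hl, hlw, hlen⟩, hd⟩
    have := invCount_mul_simpleRefl_of_isDescent hd
    exact ⟨⟨hl, hd.1⟩, hlw, by omega⟩

end Inversions

section Recursion

open scoped Classical

/-- The summand of `billey n v l` at the set `S` of positions. Positions are natural numbers rather
than elements of `Fin l.length`, so that appending a letter to `l` keeps the index type. -/
noncomputable def billeyTerm (n : ℕ) (v : Perm (Fin n)) (l : List ℕ) (S : Finset ℕ) :
    MvPolynomial (Fin n) ℤ :=
  if IsReducedWord n v ((S.sort (· ≤ ·)).map (l.getD · 0)) then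
    ∏ j ∈ S, rename (wordProd n (l.take j)) (simpleRoot n (l.getD j 0))
  else 0

variable {v : Perm (Fin n)} {l : List ℕ} {b : ℕ} {S : Finset ℕ}

lemma sort_map_valEmbedding {m : ℕ} (J : Finset (Fin m)) :
    (J.map Fin.valEmbedding).sort (· ≤ ·) = (J.sort (· ≤ ·)).map Fin.val :=
  ((Fin.val_strictMono.strictMonoOn _).map_finsetSort (f := Fin.valEmbedding)).symm

lemma billey_eq_sum_billeyTerm (v : Perm (Fin n)) (l : List ℕ) :
    billey n v l = ∑ S ∈ (range l.length).powerset, billeyTerm n v l S := by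
  refine sum_nbij' (fun J ↦ J.map Fin.valEmbedding)
    (fun S ↦ ({j | (j : ℕ) ∈ S} : Finset (Fin l.length)))
    (fun J _ ↦ ?_) (fun _ _ ↦ mem_univ _) (fun J _ ↦ ?_) (fun S hS ↦ ?_) (fun J _ ↦ ?_)
  · simp [subset_iff]
  · ext
    simp [Fin.val_inj]
  · ext j
    simp only [mem_map, mem_filter_univ, Fin.valEmbedding_apply]
    exact ⟨fun ⟨_, hj, h⟩ ↦ h ▸ hj, fun hj ↦ ⟨⟨j, mem_range.mp (mem_powerset.mp hS hj)⟩, hj, rfl⟩⟩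
  · simp [billeyTerm, sort_map_valEmbedding, wordRoot, Function.comp_def]
    rfl

lemma sort_insert_of_forall_lt {m : ℕ} (h : ∀ j ∈ S, j < m) :
    (insert m S).sort (· ≤ ·) = S.sort (· ≤ ·) ++ [m] := by
  have hm : m ∉ S := fun hm ↦ (h m hm).false
  have hnodup : (S.sort (· ≤ ·) ++ [m]).Nodup := by simp [List.nodup_append, hm]
  have hsorted : (S.sort (· ≤ ·) ++ [m]).Pairwise (· ≤ ·) := by
    simpa [List.pairwise_append] using fun a ha ↦ (h a ha).le
  convert (List.toFinset_sort (· ≤ ·) hnodup).mpr hsorted using 2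
  ext
  simp

lemma billeyTerm_append_singleton (hS : ∀ j ∈ S, j < l.length) :
    billeyTerm n v (l ++ [b]) S = billeyTerm n v l S := by
  have hget : ∀ j ∈ S, (l ++ [b]).getD j 0 = l.getD j 0 :=
    fun j hj ↦ List.getD_append _ _ _ _ (hS j hj)
  rw [billeyTerm, billeyTerm, List.map_congr_left fun j hj ↦ hget j ((mem_sort _).mp hj),
    prod_congr rfl fun j hj ↦ by rw [hget j hj, List.take_append_of_le_length (hS j hj).le]]

lemma billeyTerm_append_singleton_insert_length (hS : ∀ j ∈ S, j < l.length) :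
    billeyTerm n v (l ++ [b]) (insert l.length S) =
      if IsDescent n v b then
        billeyTerm n (v * simpleRefl n b) l S * rename (wordProd n l) (simpleRoot n b)
      else 0 := by
  have hget : ∀ j ∈ S, (l ++ [b]).getD j 0 = l.getD j 0 :=
    fun j hj ↦ List.getD_append _ _ _ _ (hS j hj)
  rw [billeyTerm, billeyTerm, sort_insert_of_forall_lt hS, List.map_append,
    List.map_congr_left fun j hj ↦ hget j ((mem_sort _).mp hj),
    prod_insert fun h ↦ (hS _ h).false, List.take_left,
    prod_congr rfl fun j hj ↦ by rw [hget j hj, List.take_append_of_le_length (hS j hj).le]]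
  simp only [List.map_cons, List.map_nil, List.getD_append_right _ _ _ _ le_rfl, Nat.sub_self,
    List.getD_cons_zero, isReducedWord_append_singleton_iff]
  split_ifs <;> simp_all [mul_comm]

theorem billey_append_singleton (v : Perm (Fin n)) (l : List ℕ) (b : ℕ) :
    billey n v (l ++ [b]) = billey n v l +
      if IsDescent n v b then
        billey n (v * simpleRefl n b) l * rename (wordProd n l) (simpleRoot n b)
      else 0 := by
  have hlt : ∀ S ∈ (range l.length).powerset, ∀ j ∈ S, j < l.length :=
    fun S hS j hj ↦ mem_range.mp (mem_powerset.mp hS hj)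
  rw [billey_eq_sum_billeyTerm, List.length_append, List.length_singleton, range_add_one,
    sum_powerset_insert notMem_range_self, billey_eq_sum_billeyTerm, billey_eq_sum_billeyTerm,
    sum_congr rfl fun S hS ↦ billeyTerm_append_singleton (b := b) (hlt S hS),
    sum_congr rfl fun S hS ↦ billeyTerm_append_singleton_insert_length (b := b) (hlt S hS)]
  split_ifs <;> simp [sum_mul]

end Recursion

section Roots

variable {b c : ℕ}

lemma rename_mul (u w : Perm (Fin n)) (p : MvPolynomial (Fin n) ℤ) :
    rename ⇑(u * w) p = rename u (rename w p) := by
  rw [rename_rename, Perm.coe_mul]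

lemma simpleRoot_of_lt (hb : b + 1 < n) :
    simpleRoot n b = X ⟨b, by omega⟩ - X ⟨b + 1, hb⟩ :=
  dif_pos hb

lemma rename_simpleRefl_simpleRoot_self (b : ℕ) :
    rename (simpleRefl n b) (simpleRoot n b) = -simpleRoot n b := by
  by_cases hb : b + 1 < n
  · rw [simpleRoot_of_lt hb, map_sub, rename_X, rename_X, simpleRefl_apply_self hb,
      simpleRefl_apply_succ hb, neg_sub]
  · simp [simpleRoot, hb]

lemma rename_simpleRefl_simpleRoot_of_far (h : c + 1 < b ∨ b + 1 < c) :
    rename (simpleRefl n c) (simpleRoot n b) = simpleRoot n b := by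
  by_cases hb : b + 1 < n
  · rw [simpleRoot_of_lt hb, map_sub, rename_X, rename_X,
      simpleRefl_apply_of_ne _ (by omega) (by omega),
      simpleRefl_apply_of_ne _ (by omega) (by omega)]
  · simp [simpleRoot, hb]

lemma rename_simpleRefl_simpleRoot_succ (hb : b + 2 < n) :
    rename (simpleRefl n b) (simpleRoot n (b + 1)) = simpleRoot n b + simpleRoot n (b + 1) := by
  rw [simpleRoot_of_lt hb, simpleRoot_of_lt (by omega), map_sub, rename_X, rename_X,
    simpleRefl_apply_succ, simpleRefl_apply_of_ne _ (by omega) (by omega)]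
  ring

lemma rename_simpleRefl_succ_simpleRoot (hb : b + 2 < n) :
    rename (simpleRefl n (b + 1)) (simpleRoot n b) = simpleRoot n b + simpleRoot n (b + 1) := by
  rw [simpleRoot_of_lt hb, simpleRoot_of_lt (by omega), map_sub, rename_X, rename_X,
    simpleRefl_apply_self hb, simpleRefl_apply_of_ne _ (by omega) (by omega)]
  ring

end Roots

section Expansion

open scoped Classical

variable (F : Perm (Fin n) → Perm (Fin n) → MvPolynomial (Fin n) ℤ)

/-- For `F v u = σ_v(u)`, the right side of `billey_append_singleton` at a reduced word for `w`
ending in `b`. -/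
noncomputable def descentExpansion (v w : Perm (Fin n)) (b : ℕ) : MvPolynomial (Fin n) ℤ :=
  F v (w * simpleRefl n b) +
    if IsDescent n v b then
      F (v * simpleRefl n b) (w * simpleRefl n b) *
        rename (w * simpleRefl n b) (simpleRoot n b)
    else 0

variable {F} {w : Perm (Fin n)} {b c : ℕ}

lemma descentExpansion_eq_of_far (hbc : b + 1 < c)
    (hb : ∀ x, F x (w * simpleRefl n b) = descentExpansion F x (w * simpleRefl n b) c)
    (hc : ∀ x, F x (w * simpleRefl n c) = descentExpansion F x (w * simpleRefl n c) b)
    (v : Perm (Fin n)) :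
    descentExpansion F v w b = descentExpansion F v w c := by
  have hcomm : ∀ u : Perm (Fin n), u * simpleRefl n c * simpleRefl n b =
      u * simpleRefl n b * simpleRefl n c := fun u ↦ by
    rw [mul_assoc, mul_assoc, simpleRefl_mul_comm hbc]
  simp only [descentExpansion, hb, hc, hcomm, isDescent_mul_simpleRefl_of_far (Or.inl hbc),
    isDescent_mul_simpleRefl_of_far (Or.inr hbc), rename_mul,
    rename_simpleRefl_simpleRoot_of_far (Or.inl hbc),
    rename_simpleRefl_simpleRoot_of_far (Or.inr hbc),
    rename_simpleRefl_simpleRoot_self, map_neg]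
  split_ifs <;> ring

lemma descentExpansion_eq_of_succ (hb : b + 2 < n)
    (h₁ : ∀ x, F x (w * simpleRefl n b) = descentExpansion F x (w * simpleRefl n b) (b + 1))
    (h₂ : ∀ x, F x (w * simpleRefl n b * simpleRefl n (b + 1)) =
      descentExpansion F x (w * simpleRefl n b * simpleRefl n (b + 1)) b)
    (h₃ : ∀ x, F x (w * simpleRefl n (b + 1)) = descentExpansion F x (w * simpleRefl n (b + 1)) b)
    (h₄ : ∀ x, F x (w * simpleRefl n (b + 1) * simpleRefl n b) =
      descentExpansion F x (w * simpleRefl n (b + 1) * simpleRefl n b) (b + 1))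
    (v : Perm (Fin n)) :
    descentExpansion F v w b = descentExpansion F v w (b + 1) := by
  have hbraid : ∀ u : Perm (Fin n),
      u * simpleRefl n (b + 1) * simpleRefl n b * simpleRefl n (b + 1) =
        u * simpleRefl n b * simpleRefl n (b + 1) * simpleRefl n b := fun u ↦ by
    simp only [mul_assoc, ← simpleRefl_braid hb]
  simp only [descentExpansion, h₁, h₂, h₃, h₄, hbraid, mul_simpleRefl_mul_simpleRefl,
    isDescent_mul_simpleRefl_self (by omega : b + 1 < n),
    isDescent_mul_simpleRefl_self hb, isDescent_mul_simpleRefl_succ_iff hb,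
    isDescent_mul_simpleRefl_succ_mul_simpleRefl_iff hb, rename_mul,
    rename_simpleRefl_simpleRoot_self, rename_simpleRefl_simpleRoot_succ hb,
    rename_simpleRefl_succ_simpleRoot hb, map_neg, map_add]
  split_ifs <;> ring

end Expansion

section WellDefined

variable {w : Perm (Fin n)} {b c : ℕ}

lemma exists_isReducedWord (w : Perm (Fin n)) : ∃ l, IsReducedWord n w l := by
  obtain ⟨l, hl⟩ := exists_word_length_eq_invCount w
  exact ⟨l, isReducedWord_iff.mpr hl⟩

noncomputable def reducedWord (w : Perm (Fin n)) : List ℕ := (exists_isReducedWord w).choose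

lemma isReducedWord_reducedWord (w : Perm (Fin n)) : IsReducedWord n w (reducedWord w) :=
  (exists_isReducedWord w).choose_spec

noncomputable def schubertValue (n : ℕ) (v w : Perm (Fin n)) : MvPolynomial (Fin n) ℤ :=
  billey n v (reducedWord w)

def BilleyIndependent (n : ℕ) (w : Perm (Fin n)) : Prop :=
  ∀ v l l', IsReducedWord n w l → IsReducedWord n w l' → billey n v l = billey n v l'

lemma billey_eq_descentExpansion (h : BilleyIndependent n (w * simpleRefl n b)) {l : List ℕ}
    (hl : IsReducedWord n w (l ++ [b])) (v : Perm (Fin n)) :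
    billey n v (l ++ [b]) = descentExpansion (schubertValue n) v w b := by
  have hl' := (isReducedWord_append_singleton_iff.mp hl).1
  rw [billey_append_singleton, descentExpansion, schubertValue, schubertValue,
    h v _ _ hl' (isReducedWord_reducedWord _),
    h (v * simpleRefl n b) _ _ hl' (isReducedWord_reducedWord _), hl'.2.1]

lemma schubertValue_eq_descentExpansion (hw : BilleyIndependent n w)
    (hwb : BilleyIndependent n (w * simpleRefl n b)) (hb : IsDescent n w b) (v : Perm (Fin n)) :
    schubertValue n v w = descentExpansion (schubertValue n) v w b := by
  have hl : IsReducedWord n w (reducedWord (w * simpleRefl n b) ++ [b]) :=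
    isReducedWord_append_singleton_iff.mpr ⟨isReducedWord_reducedWord _, hb⟩
  rw [schubertValue, hw v _ _ (isReducedWord_reducedWord w) hl, billey_eq_descentExpansion hwb hl]

lemma descentExpansion_eq_of_isDescent
    (ih : ∀ u : Perm (Fin n), invCount u < invCount w → BilleyIndependent n u)
    (hb : IsDescent n w b) (hc : IsDescent n w c) (v : Perm (Fin n)) :
    descentExpansion (schubertValue n) v w b = descentExpansion (schubertValue n) v w c := by
  wlog hbc : b ≤ c generalizing b c with H
  · exact (H hc hb (le_of_not_ge hbc)).symm
  have hexp : ∀ u d, invCount u < invCount w → IsDescent n u d →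
      ∀ x, schubertValue n x u = descentExpansion (schubertValue n) x u d := fun u d hu hd ↦
    schubertValue_eq_descentExpansion (ih u hu)
      (ih _ ((invCount_mul_simpleRefl_lt hd).trans hu)) hd
  have hwb := invCount_mul_simpleRefl_lt hb
  have hwc := invCount_mul_simpleRefl_lt hc
  rcases (by omega : c = b ∨ c = b + 1 ∨ b + 1 < c) with rfl | rfl | hbc
  · rfl
  · have hb₂ : b + 2 < n := hc.1
    have hwbc := hb.mul_simpleRefl_succ hc
    have hwcb := (isDescent_mul_simpleRefl_succ_iff hb₂).mpr hwbc
    exact descentExpansion_eq_of_succ hb₂ (hexp _ _ hwb hwbc)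
      (hexp _ _ ((invCount_mul_simpleRefl_lt hwbc).trans hwb)
        ((isDescent_mul_simpleRefl_mul_simpleRefl_succ_iff hb₂).mpr hc))
      (hexp _ _ hwc hwcb)
      (hexp _ _ ((invCount_mul_simpleRefl_lt hwcb).trans hwc)
        ((isDescent_mul_simpleRefl_succ_mul_simpleRefl_iff hb₂).mpr hb)) v
  · exact descentExpansion_eq_of_far hbc
      (hexp _ _ hwb ((isDescent_mul_simpleRefl_of_far (Or.inl hbc)).mpr hc))
      (hexp _ _ hwc ((isDescent_mul_simpleRefl_of_far (Or.inr hbc)).mpr hb)) v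

theorem billeyIndependent (w : Perm (Fin n)) : BilleyIndependent n w := by
  induction hm : invCount w using Nat.strong_induction_on generalizing w with
  | _ m ih =>
  subst hm
  replace ih : ∀ u, invCount u < invCount w → BilleyIndependent n u := fun u hu ↦ ih _ hu u rfl
  intro v l l' hl hl'
  rcases l.eq_nil_or_concat' with rfl | ⟨l, b, rfl⟩
  · rw [List.length_eq_zero_iff.mp (IsReducedWord.length_eq hl' hl)]
  rcases l'.eq_nil_or_concat' with rfl | ⟨l', c, rfl⟩
  · simpa using IsReducedWord.length_eq hl hl'
  have hb := (isReducedWord_append_singleton_iff.mp hl).2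
  have hc := (isReducedWord_append_singleton_iff.mp hl').2
  rw [billey_eq_descentExpansion (ih _ (invCount_mul_simpleRefl_lt hb)) hl,
    billey_eq_descentExpansion (ih _ (invCount_mul_simpleRefl_lt hc)) hl']
  exact descentExpansion_eq_of_isDescent ih hb hc v

end WellDefined

end Billey

theorem billey_stmt_2_general (n : ℕ) (v w : Equiv.Perm (Fin n))
    (l l' : List ℕ) (hl : IsReducedWord n w l) (hl' : IsReducedWord n w l') :
    billey n v l = billey n v l' :=
  Billey.billeyIndependent w v l l' hl hl'

/-- Billey's formula is independent of the choice of reduced word for `w`. -/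
theorem billey_stmt_2 (n : ℕ) (hn : 1 ≤ n) (v w : Equiv.Perm (Fin n))
    (l l' : List ℕ) (hl : IsReducedWord n w l) (hl' : IsReducedWord n w l') :
    billey n v l = billey n v l' :=
  billey_stmt_2_general n v w l l' hl hl'
end

section
/- Fix n ≥ 1 and permutations v, w in S_n. If v ≰ w in Bruhat order, then σ_v(w) = 0 (computed from any reduced word for w). -/
/-!
Every nonzero term of Billey's sum is indexed by a subword of the reduced word `l` of `w` that
is itself a reduced word for `v`. By the subword property of the Bruhat order this forces
`v ≤ w`, so under `v ≰ w` every term vanishes.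

The subword property follows, by induction along the word, from the lifting property: if `s` is
a simple reflection with `u < s u` and `u ≤ w`, then `s u ≤ s w` when `w < s w`, and `s u ≤ w`
when `s w < w`. Lifting in turn rests on the strong exchange condition. In `S_n` it comes from
watching the positions `π⁻¹ p`, `π⁻¹ q` along the prefix products `π` of a word: they can only
change their relative order at a letter `s_b` with `{π⁻¹ p, π⁻¹ q} = {b, b + 1}`, and deleting
that letter multiplies the word by `swap p q`.
-/

open Equiv MvPolynomial

open Equiv.Perm

namespace Equiv.Perm.IsSwap

variable {α : Type*} [DecidableEq α] {t : Perm α}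

theorem mul_self (ht : t.IsSwap) : t * t = 1 := by
  obtain ⟨x, y, -, rfl⟩ := ht
  exact swap_mul_self x y

theorem conj (ht : t.IsSwap) (g : Perm α) : (g * t * g⁻¹).IsSwap := by
  obtain ⟨x, y, hxy, rfl⟩ := ht
  exact ⟨g x, g y, g.injective.ne hxy, (swap_apply_apply g x y).symm⟩

end Equiv.Perm.IsSwap

section

variable {n : ℕ}

theorem simpleRefl_of_lt {b : ℕ} (hb : b + 1 < n) :
    simpleRefl n b = swap ⟨b, Nat.lt_of_succ_lt hb⟩ ⟨b + 1, hb⟩ :=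
  dif_pos hb

theorem isSwap_simpleRefl {b : ℕ} (hb : b + 1 < n) : (simpleRefl n b).IsSwap :=
  ⟨_, _, by simp [Fin.ext_iff], simpleRefl_of_lt hb⟩

@[simp]
theorem simpleRefl_mul_self (b : ℕ) : simpleRefl n b * simpleRefl n b = 1 := by
  unfold simpleRefl
  split_ifs <;> simp

@[simp]
theorem simpleRefl_mul_self_mul (b : ℕ) (x : Perm (Fin n)) :
    simpleRefl n b * (simpleRefl n b * x) = x := by
  rw [← mul_assoc, simpleRefl_mul_self, one_mul]

@[simp]
theorem simpleRefl_inv (b : ℕ) : (simpleRefl n b)⁻¹ = simpleRefl n b :=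
  inv_eq_of_mul_eq_one_right (simpleRefl_mul_self b)

theorem simpleRefl_apply_lt_apply (b : ℕ) {p q : Fin n} (hpq : p < q)
    (h : ¬((p : ℕ) = b ∧ (q : ℕ) = b + 1)) : simpleRefl n b p < simpleRefl n b q := by
  unfold simpleRefl
  split_ifs
  · obtain ⟨p, hp⟩ := p
    obtain ⟨q, hq⟩ := q
    simp only [swap_apply_def, Fin.mk.injEq, Fin.mk_lt_mk] at hpq h ⊢
    split_ifs <;> simp only [Fin.mk_lt_mk] <;> omega
  · exact hpq

@[simp]
theorem wordProd_nil : wordProd n [] = 1 := rfl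

@[simp]
theorem wordProd_cons (b : ℕ) (l : List ℕ) :
    wordProd n (b :: l) = simpleRefl n b * wordProd n l := by
  simp [wordProd]

theorem wordProd_append (l₁ l₂ : List ℕ) :
    wordProd n (l₁ ++ l₂) = wordProd n l₁ * wordProd n l₂ := by
  simp [wordProd]

theorem IsWord.tail {b : ℕ} {l : List ℕ} (h : IsWord n (b :: l)) : IsWord n l :=
  fun c hc => h c (List.mem_cons_of_mem b hc)

theorem IsWord.cons {b : ℕ} {l : List ℕ} (hb : b + 1 < n) (hl : IsWord n l) :
    IsWord n (b :: l) :=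
  fun c hc => (List.mem_cons.1 hc).elim (fun h => h ▸ hb) (hl c)

theorem IsWord.sublist {l₁ l₂ : List ℕ} (h : IsWord n l₂) (hsub : l₁.Sublist l₂) :
    IsWord n l₁ :=
  fun c hc => h c (hsub.mem hc)

/-- The reflection `t_j = (s_{b_1} ⋯ s_{b_{j-1}}) s_{b_j} (s_{b_1} ⋯ s_{b_{j-1}})⁻¹` of position `j`
(0-indexed) of a word; its root is the `wordRoot` of that position. -/
def wordRefl (n : ℕ) : List ℕ → ℕ → Perm (Fin n)
  | [], _ => 1
  | b :: _, 0 => simpleRefl n b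
  | b :: l, j + 1 => simpleRefl n b * wordRefl n l j * simpleRefl n b

theorem wordRefl_mul_wordProd (l : List ℕ) (j : ℕ) :
    wordRefl n l j * wordProd n l = wordProd n (l.eraseIdx j) := by
  induction l generalizing j with
  | nil => simp [wordRefl]
  | cons b l ih =>
    cases j with
    | zero => simp [wordRefl]
    | succ j => simp [wordRefl, mul_assoc, ih]

theorem isSwap_wordRefl {l : List ℕ} (hl : IsWord n l) {j : ℕ} (hj : j < l.length) :
    (wordRefl n l j).IsSwap := by
  induction l generalizing j with
  | nil => simp at hj
  | cons b l ih =>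
    cases j with
    | zero => exact isSwap_simpleRefl (hl b List.mem_cons_self)
    | succ j =>
      simpa [wordRefl] using (ih hl.tail (by simpa using hj)).conj (simpleRefl n b)

theorem exists_wordRefl_eq_swap {l : List ℕ} (hl : IsWord n l) {p q : Fin n} (hpq : p < q)
    (hinv : (wordProd n l)⁻¹ q < (wordProd n l)⁻¹ p) :
    ∃ j < l.length, wordRefl n l j = swap p q := by
  induction l generalizing p q with
  | nil => exact absurd hpq (not_lt.2 (by simpa using hinv.le))
  | cons b l ih =>
    have hb : b + 1 < n := hl b List.mem_cons_self
    by_cases hpqb : (p : ℕ) = b ∧ (q : ℕ) = b + 1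
    · refine ⟨0, by simp, ?_⟩
      rw [wordRefl, simpleRefl_of_lt hb]
      congr 1 <;> ext <;> simp [hpqb]
    · obtain ⟨j, hj, hrefl⟩ := ih hl.tail (simpleRefl_apply_lt_apply b hpq hpqb)
        (by simpa [mul_inv_rev] using hinv)
      refine ⟨j + 1, by simpa using hj, ?_⟩
      rw [wordRefl, hrefl, swap_apply_apply, simpleRefl_inv]
      simp [mul_assoc]

theorem coxLen_wordProd_le {l : List ℕ} (hl : IsWord n l) :
    coxLen n (wordProd n l) ≤ l.length :=
  Nat.sInf_le ⟨l, hl, rfl, rfl⟩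

theorem IsReducedWord.coxLen_eq {w : Perm (Fin n)} {l : List ℕ} (h : IsReducedWord n w l) :
    coxLen n w = l.length := by
  obtain ⟨l₀, hl₀, hw₀, hlen₀⟩ := Nat.sInf_mem (⟨_, l, h.1, h.2.1, rfl⟩ :
    {m | ∃ l : List ℕ, IsWord n l ∧ wordProd n l = w ∧ l.length = m}.Nonempty)
  refine le_antisymm (Nat.sInf_le ⟨l, h.1, h.2.1, rfl⟩) ?_
  rw [coxLen, ← hlen₀]
  exact h.2.2 l₀ hl₀ hw₀

theorem IsReducedWord.tail {w : Perm (Fin n)} {b : ℕ} {l : List ℕ}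
    (h : IsReducedWord n w (b :: l)) : IsReducedWord n (wordProd n l) l := by
  refine ⟨h.1.tail, rfl, fun l' hl' hw' => ?_⟩
  have := h.2.2 (b :: l') (hl'.cons (h.1 b List.mem_cons_self))
    (by rw [wordProd_cons, hw', ← wordProd_cons, h.2.1])
  simpa using this

theorem IsReducedWord.coxLen_tail_lt {w : Perm (Fin n)} {b : ℕ} {l : List ℕ}
    (h : IsReducedWord n w (b :: l)) :
    coxLen n (wordProd n l) < coxLen n (simpleRefl n b * wordProd n l) := by
  rw [← wordProd_cons, h.2.1, h.coxLen_eq, h.tail.coxLen_eq]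
  simp

theorem exists_isWord_wordProd_eq (w : Perm (Fin n)) : ∃ l, IsWord n l ∧ wordProd n l = w := by
  cases n with
  | zero => exact ⟨[], by simp [IsWord], Subsingleton.elim _ _⟩
  | succ m =>
    have hw : w ∈ Submonoid.closure (Set.range fun i : Fin m ↦ swap i.castSucc i.succ) := by
      rw [mclosure_swap_castSucc_succ]
      trivial
    induction hw using Submonoid.closure_induction with
    | mem _ hx =>
      obtain ⟨i, rfl⟩ := hx
      refine ⟨[i], by simp [IsWord], ?_⟩
      simp only [wordProd, List.map_cons, List.map_nil, List.prod_singleton]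
      exact simpleRefl_of_lt (Nat.succ_lt_succ i.isLt)
    | one => exact ⟨[], by simp [IsWord], rfl⟩
    | mul _ _ _ _ h₁ h₂ =>
      obtain ⟨l₁, hl₁, rfl⟩ := h₁
      obtain ⟨l₂, hl₂, rfl⟩ := h₂
      exact ⟨l₁ ++ l₂, fun c hc => (List.mem_append.1 hc).elim (hl₁ c) (hl₂ c),
        wordProd_append l₁ l₂⟩

theorem exists_isReducedWord (w : Perm (Fin n)) : ∃ l, IsReducedWord n w l := by
  obtain ⟨l, hl, hw, hlen⟩ := Nat.sInf_mem (by
    obtain ⟨l, hl, hw⟩ := exists_isWord_wordProd_eq w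
    exact ⟨_, l, hl, hw, rfl⟩ :
    {m | ∃ l : List ℕ, IsWord n l ∧ wordProd n l = w ∧ l.length = m}.Nonempty)
  exact ⟨l, hl, hw, fun l' hl' hw' => hlen ▸ Nat.sInf_le ⟨l', hl', hw', rfl⟩⟩

theorem coxLen_swap_mul_lt {w : Perm (Fin n)} {p q : Fin n} (hpq : p < q)
    (h : w⁻¹ q < w⁻¹ p) : coxLen n (swap p q * w) < coxLen n w := by
  obtain ⟨l, hl⟩ := exists_isReducedWord w
  obtain ⟨j, hj, hrefl⟩ := exists_wordRefl_eq_swap hl.1 hpq (by rwa [hl.2.1])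
  calc coxLen n (swap p q * w) = coxLen n (wordProd n (l.eraseIdx j)) := by
        rw [← hrefl, ← hl.2.1, wordRefl_mul_wordProd]
    _ ≤ (l.eraseIdx j).length := coxLen_wordProd_le (hl.1.sublist (l.eraseIdx_sublist j))
    _ < l.length := by rw [List.length_eraseIdx_of_lt hj]; omega
    _ = coxLen n w := hl.coxLen_eq.symm

theorem coxLen_lt_swap_mul {w : Perm (Fin n)} {p q : Fin n} (hpq : p < q)
    (h : w⁻¹ p < w⁻¹ q) : coxLen n w < coxLen n (swap p q * w) := by
  simpa [← mul_assoc] using coxLen_swap_mul_lt (w := swap p q * w) hpq (by simpa using h)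

theorem coxLen_swap_mul_ne {t : Perm (Fin n)} (ht : t.IsSwap) (w : Perm (Fin n)) :
    coxLen n (t * w) ≠ coxLen n w := by
  obtain ⟨p, q, hpq, rfl⟩ := ht
  wlog hlt : p < q generalizing p q
  · rw [swap_comm]
    exact this q p hpq.symm (hpq.lt_or_gt.resolve_left hlt)
  rcases lt_trichotomy (w⁻¹ p) (w⁻¹ q) with h | h | h
  · exact (coxLen_lt_swap_mul hlt h).ne'
  · exact absurd (w⁻¹.injective h) hpq
  · exact (coxLen_swap_mul_lt hlt h).ne

theorem coxLen_simpleRefl_mul_le {b : ℕ} (hb : b + 1 < n) (w : Perm (Fin n)) :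
    coxLen n (simpleRefl n b * w) ≤ coxLen n w + 1 := by
  obtain ⟨l, hl⟩ := exists_isReducedWord w
  have hle := coxLen_wordProd_le (hl.1.cons hb)
  rw [wordProd_cons, hl.2.1] at hle
  simpa [hl.coxLen_eq] using hle

theorem exists_wordRefl_eq_of_coxLen_lt {l : List ℕ} (hl : IsWord n l) {t : Perm (Fin n)}
    (ht : t.IsSwap) (hlt : coxLen n (t * wordProd n l) < coxLen n (wordProd n l)) :
    ∃ j < l.length, wordRefl n l j = t := by
  obtain ⟨p, q, hpq, rfl⟩ := ht
  wlog hpq' : p < q generalizing p q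
  · rw [swap_comm] at hlt ⊢
    exact this q p hpq.symm hlt (hpq.lt_or_gt.resolve_left hpq')
  refine exists_wordRefl_eq_swap hl hpq' (lt_of_not_ge fun hle => ?_)
  exact (coxLen_lt_swap_mul hpq' (hle.lt_of_ne ((wordProd n l)⁻¹.injective.ne hpq))).not_gt hlt

theorem BruhatLE.refl (x : Perm (Fin n)) : BruhatLE n x x :=
  Relation.ReflTransGen.refl

theorem BruhatLE.trans {x y z : Perm (Fin n)} (hxy : BruhatLE n x y) (hyz : BruhatLE n y z) :
    BruhatLE n x z :=
  Relation.ReflTransGen.trans hxy hyz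

theorem bruhatLE_swap_mul {t x : Perm (Fin n)} (ht : t.IsSwap)
    (h : coxLen n x < coxLen n (t * x)) : BruhatLE n x (t * x) :=
  Relation.ReflTransGen.single ⟨⟨t, ht, rfl⟩, h⟩

theorem swap_mul_bruhatLE {t x : Perm (Fin n)} (ht : t.IsSwap)
    (h : coxLen n (t * x) < coxLen n x) : BruhatLE n (t * x) x := by
  have hx : t * (t * x) = x := by rw [← mul_assoc, ht.mul_self, one_mul]
  simpa [hx] using bruhatLE_swap_mul ht (x := t * x) (by rwa [hx])

theorem simpleRefl_mul_swap_mul_bruhatLE {b : ℕ} (hb : b + 1 < n) {t w : Perm (Fin n)}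
    (ht : t.IsSwap) (htw : coxLen n (t * w) < coxLen n w)
    (hsw : coxLen n (simpleRefl n b * w) < coxLen n w) :
    BruhatLE n (simpleRefl n b * (t * w)) w := by
  obtain ⟨l, hl⟩ := exists_isReducedWord (simpleRefl n b * w)
  have hprod : wordProd n (b :: l) = w := by simp [hl.2.1]
  obtain ⟨j, hj, rfl⟩ := exists_wordRefl_eq_of_coxLen_lt (hl.1.cons hb) ht (by rwa [hprod])
  cases j with
  | zero => simpa [wordRefl] using BruhatLE.refl w
  | succ j =>
    have hj : j < l.length := by simpa using hj
    set r := wordRefl n l j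
    have hrw : simpleRefl n b * (wordRefl n (b :: l) (j + 1) * w) = r * (simpleRefl n b * w) := by
      simp [wordRefl, r, mul_assoc]
    have hshort : coxLen n (r * (simpleRefl n b * w)) < coxLen n (simpleRefl n b * w) := by
      calc coxLen n (r * (simpleRefl n b * w)) ≤ (l.eraseIdx j).length := by
            rw [← hl.2.1, wordRefl_mul_wordProd]
            exact coxLen_wordProd_le (hl.1.sublist (l.eraseIdx_sublist j))
        _ < l.length := by rw [List.length_eraseIdx_of_lt hj]; omega
        _ = coxLen n (simpleRefl n b * w) := hl.coxLen_eq.symm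
    rw [hrw]
    exact (swap_mul_bruhatLE (isSwap_wordRefl hl.1 hj) hshort).trans
      (swap_mul_bruhatLE (isSwap_simpleRefl hb) hsw)

theorem BruhatLE.lifting {b : ℕ} (hb : b + 1 < n) {u w : Perm (Fin n)} (huw : BruhatLE n u w)
    (hu : coxLen n u < coxLen n (simpleRefl n b * u)) :
    (coxLen n w < coxLen n (simpleRefl n b * w) →
      BruhatLE n (simpleRefl n b * u) (simpleRefl n b * w)) ∧
    (coxLen n (simpleRefl n b * w) < coxLen n w → BruhatLE n (simpleRefl n b * u) w) := by
  set s := simpleRefl n b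
  have hs : s.IsSwap := isSwap_simpleRefl hb
  have hs_le : ∀ x, coxLen n (s * x) ≤ coxLen n x + 1 := coxLen_simpleRefl_mul_le hb
  induction huw with
  | refl => exact ⟨fun _ => BruhatLE.refl _, fun h => absurd hu (lt_asymm h)⟩
  | @tail w' w _ hstep ih =>
    obtain ⟨⟨t, ht, rfl⟩, hlt⟩ := hstep
    have hw' : BruhatLE n w' (t * w') := bruhatLE_swap_mul ht hlt
    rcases (coxLen_swap_mul_ne hs w').lt_or_gt with hdown | hup
    · have hsu := ih.2 hdown
      exact ⟨fun h => hsu.trans (hw'.trans (bruhatLE_swap_mul hs h)), fun _ => hsu.trans hw'⟩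
    · have hsu := ih.1 hup
      refine ⟨fun h => hsu.trans ?_, fun h => hsu.trans ?_⟩
      · have hconj : s * t * s⁻¹ * (s * w') = s * (t * w') := by group
        have hlen : coxLen n (s * w') < coxLen n (s * (t * w')) := by
          have := hs_le w'
          omega
        simpa [hconj] using bruhatLE_swap_mul (ht.conj s) (x := s * w') (by rwa [hconj])
      · have htt : t * (t * w') = w' := by rw [← mul_assoc, ht.mul_self, one_mul]
        simpa [htt] using simpleRefl_mul_swap_mul_bruhatLE hb ht (by rwa [htt]) h

theorem bruhatLE_of_sublist {l₁ l₂ : List ℕ} (hsub : l₁.Sublist l₂) {v w : Perm (Fin n)}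
    (hv : IsReducedWord n v l₁) (hw : IsReducedWord n w l₂) : BruhatLE n v w := by
  induction hsub generalizing v w with
  | slnil => simpa [← hv.2.1, ← hw.2.1] using BruhatLE.refl (n := n) 1
  | cons b _ ih =>
    have hb : b + 1 < n := hw.1 b List.mem_cons_self
    rw [← hw.2.1, wordProd_cons]
    exact (ih hv hw.tail).trans (bruhatLE_swap_mul (isSwap_simpleRefl hb) hw.coxLen_tail_lt)
  | cons_cons b _ ih =>
    have hb : b + 1 < n := hw.1 b List.mem_cons_self
    rw [← hv.2.1, ← hw.2.1, wordProd_cons, wordProd_cons]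
    exact ((ih hv.tail hw.tail).lifting hb hv.coxLen_tail_lt).1 hw.coxLen_tail_lt

theorem Finset.sort_map_get_sublist {α : Type*} (l : List α) (J : Finset (Fin l.length)) :
    ((J.sort (· ≤ ·)).map l.get).Sublist l := by
  conv_rhs => rw [← List.map_get_finRange l]
  refine List.Sublist.map _ (List.sublist_of_subperm_of_sortedLE ?_ (J.sortedLT_sort).sortedLE
    (List.sortedLT_finRange _).sortedLE)
  exact List.subperm_of_subset (J.sort_nodup _) fun x _ => List.mem_finRange x

end

theorem billey_stmt_8_general (n : ℕ) (v w : Equiv.Perm (Fin n))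
    (hvw : ¬ BruhatLE n v w) (l : List ℕ) (hl : IsReducedWord n w l) :
    billey n v l = 0 :=
  Finset.sum_eq_zero fun J _ =>
    if_neg fun hv => hvw (bruhatLE_of_sublist (J.sort_map_get_sublist l) hv hl)

/-- If `v ≰ w` in Bruhat order, then `σ_v(w) = 0`, computed from any
reduced word for `w`. -/
theorem billey_stmt_8 (n : ℕ) (hn : 1 ≤ n) (v w : Equiv.Perm (Fin n))
    (hvw : ¬ BruhatLE n v w) (l : List ℕ) (hl : IsReducedWord n w l) :
    billey n v l = 0 :=
  billey_stmt_8_general n v w hvw l hl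
end
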